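/- arXiv:2602.01631 — 4 statements merged into one kernel-verified Lean document; each statement's English description precedes it below -/
import Mathlib

section
/- Let D ∈ {0,1} be a random variable with e = P(D=1 | W) for a discrete random variable W, and suppose 0 < e < 1 almost surely and π = P(D=1) > 0. For any bounded random variable Y, E[ ((D - e)/(π(1-e))) · Y ] = E[ (e/π) · ( E[Y | D=1, W] − E[Y | D=0, W] ) ]. -/
open Finset
open scoped Classical BigOperators

variable {Ω : Type*} [Fintype Ω] {𝕎 : Type*} [Fintype 𝕎] [DecidableEq 𝕎]

/-- Expectation on a finite probability space with mass function `p`. -/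
noncomputable def Ex (p : Ω → ℝ) (f : Ω → ℝ) : ℝ := ∑ ω, p ω * f ω

/-- Probability of an event. -/
noncomputable def Pr (p : Ω → ℝ) (A : Ω → Prop) : ℝ := ∑ ω ∈ univ.filter A, p ω

/-- Conditional expectation of `f` given the event `A`. -/
noncomputable def CE (p : Ω → ℝ) (f : Ω → ℝ) (A : Ω → Prop) : ℝ :=
  (∑ ω ∈ univ.filter A, p ω * f ω) / Pr p A

/-- Covariance. -/
noncomputable def Cov (p : Ω → ℝ) (f g : Ω → ℝ) : ℝ :=
  Ex p (fun ω => f ω * g ω) - Ex p f * Ex p g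

theorem ipw_conditional_contrast_expectation
    (p : Ω → ℝ) (hp : ∀ ω, 0 ≤ p ω) (hp1 : ∑ ω, p ω = 1)
    (D : Ω → ℝ) (hD : ∀ ω, D ω = 0 ∨ D ω = 1)
    (W : Ω → 𝕎) (Y : Ω → ℝ)
    (e : 𝕎 → ℝ) (π : ℝ)
    (he : ∀ w, e w = Pr p (fun ω => D ω = 1 ∧ W ω = w) / Pr p (fun ω => W ω = w))
    (hπ : π = Pr p (fun ω => D ω = 1))
    (hπpos : 0 < π)
    (hoverlap : ∀ w, 0 < Pr p (fun ω => W ω = w) → 0 < e w ∧ e w < 1) :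
    Ex p (fun ω => (D ω - e (W ω)) / (π * (1 - e (W ω))) * Y ω)
      = Ex p (fun ω => e (W ω) / π *
          (CE p Y (fun ω' => D ω' = 1 ∧ W ω' = W ω)
            - CE p Y (fun ω' => D ω' = 0 ∧ W ω' = W ω))) := by
  have hfib : ∀ (f : Ω → ℝ),
      Ex p f = ∑ w : 𝕎, ∑ ω ∈ univ.filter (fun ω => W ω = w), p ω * f ω := by
    intro f
    rw [Ex, ← Finset.sum_fiberwise_of_maps_to (fun ω _ => Finset.mem_univ (W ω))]
  rw [hfib, hfib]
  refine Finset.sum_congr rfl fun w _ => ?_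
  have hL : ∀ ω ∈ univ.filter (fun ω => W ω = w),
      p ω * ((D ω - e (W ω)) / (π * (1 - e (W ω))) * Y ω)
        = p ω * ((D ω - e w) / (π * (1 - e w)) * Y ω) := by
    intro ω hω
    rw [(Finset.mem_filter.mp hω).2]
  have hR : ∀ ω ∈ univ.filter (fun ω => W ω = w),
      p ω * (e (W ω) / π *
          (CE p Y (fun ω' => D ω' = 1 ∧ W ω' = W ω)
            - CE p Y (fun ω' => D ω' = 0 ∧ W ω' = W ω)))
        = p ω * (e w / π *
          (CE p Y (fun ω' => D ω' = 1 ∧ W ω' = w)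
            - CE p Y (fun ω' => D ω' = 0 ∧ W ω' = w))) := by
    intro ω hω
    rw [(Finset.mem_filter.mp hω).2]
  rw [Finset.sum_congr rfl hL, Finset.sum_congr rfl hR]
  set Pw := ∑ ω ∈ univ.filter (fun ω => W ω = w), p ω with hPw
  set P1 := ∑ ω ∈ univ.filter (fun ω => D ω = 1 ∧ W ω = w), p ω with hP1def
  set P0 := ∑ ω ∈ univ.filter (fun ω => D ω = 0 ∧ W ω = w), p ω with hP0def
  set S1 := ∑ ω ∈ univ.filter (fun ω => D ω = 1 ∧ W ω = w), p ω * Y ω with hS1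
  set S0 := ∑ ω ∈ univ.filter (fun ω => D ω = 0 ∧ W ω = w), p ω * Y ω with hS0
  have hPwnn : 0 ≤ Pw := Finset.sum_nonneg fun ω _ => hp ω
  rcases eq_or_lt_of_le hPwnn with h0 | hpos
  · -- Pw = 0 : all masses vanish on the fiber
    have hz : ∀ ω, W ω = w → p ω = 0 := by
      intro ω hWω
      have h1 : p ω ≤ Pw := by
        rw [hPw]
        exact Finset.single_le_sum (fun i _ => hp i) (by simp [hWω])
      have := hp ω
      linarith
    rw [Finset.sum_eq_zero (fun ω hω => by
          rw [hz ω (Finset.mem_filter.mp hω).2, zero_mul]),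
        Finset.sum_eq_zero (fun ω hω => by
          rw [hz ω (Finset.mem_filter.mp hω).2, zero_mul])]
  · -- Pw > 0
    have hPrPw : Pr p (fun ω => W ω = w) = Pw := by
      rw [Pr, hPw]
      exact Finset.sum_congr (by ext ω; simp) fun _ _ => rfl
    have hPrP1 : Pr p (fun ω => D ω = 1 ∧ W ω = w) = P1 := by
      rw [Pr, hP1def]
      exact Finset.sum_congr (by ext ω; simp) fun _ _ => rfl
    have hPrP0 : Pr p (fun ω => D ω = 0 ∧ W ω = w) = P0 := by
      rw [Pr, hP0def]
      exact Finset.sum_congr (by ext ω; simp) fun _ _ => rfl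
    obtain ⟨he0, he1⟩ := hoverlap w (by rw [hPrPw]; exact hpos)
    have hπne : π ≠ 0 := ne_of_gt hπpos
    have h1e : (1 : ℝ) - e w ≠ 0 := by linarith
    have hset1 : univ.filter (fun ω => D ω = 1 ∧ W ω = w)
        = (univ.filter (fun ω => W ω = w)).filter (fun ω => D ω = 1) := by
      ext ω; simp [and_comm]
    have hset0 : univ.filter (fun ω => D ω = 0 ∧ W ω = w)
        = (univ.filter (fun ω => W ω = w)).filter (fun ω => ¬ D ω = 1) := by
      ext ω
      rcases hD ω with h | h <;> simp [h, and_comm]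
    have hsplitP : P1 + P0 = Pw := by
      rw [hP1def, hP0def, hPw, hset1, hset0]
      exact Finset.sum_filter_add_sum_filter_not _ _ _
    have he'' : e w = P1 / Pw := by rw [he w, hPrPw, hPrP1]
    have hP1 : P1 = e w * Pw := by
      rw [he'', div_mul_cancel₀ _ (ne_of_gt hpos)]
    have hP0 : P0 = (1 - e w) * Pw := by linarith [hsplitP, hP1]
    have hP1pos : 0 < P1 := by rw [hP1]; positivity
    have hP0pos : 0 < P0 := by
      rw [hP0]
      have : 0 < 1 - e w := by linarith
      positivity
    have hCE1 : CE p Y (fun ω' => D ω' = 1 ∧ W ω' = w) = S1 / P1 := by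
      rw [CE, hPrP1]
      congr 1
      rw [hS1]
      exact Finset.sum_congr (by ext ω; simp) fun _ _ => rfl
    have hCE0 : CE p Y (fun ω' => D ω' = 0 ∧ W ω' = w) = S0 / P0 := by
      rw [CE, hPrP0]
      congr 1
      rw [hS0]
      exact Finset.sum_congr (by ext ω; simp) fun _ _ => rfl
    have hLHS : ∑ ω ∈ univ.filter (fun ω => W ω = w),
        p ω * ((D ω - e w) / (π * (1 - e w)) * Y ω)
        = (1 - e w) / (π * (1 - e w)) * S1 + (0 - e w) / (π * (1 - e w)) * S0 := by
      rw [← Finset.sum_filter_add_sum_filter_not (univ.filter (fun ω => W ω = w))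
        (fun ω => D ω = 1), ← hset1, ← hset0]
      congr 1
      · rw [hS1, Finset.mul_sum]
        refine Finset.sum_congr rfl fun ω hω => ?_
        have hDω : D ω = 1 := (Finset.mem_filter.mp hω).2.1
        rw [hDω]; ring
      · rw [hS0, Finset.mul_sum]
        refine Finset.sum_congr rfl fun ω hω => ?_
        have hDω : D ω = 0 := (Finset.mem_filter.mp hω).2.1
        rw [hDω]; ring
    rw [hLHS, hCE1, hCE0, ← Finset.sum_mul, ← hPw, hP1, hP0]
    field_simp
    ring
end

section
/- Double robustness under correct propensity scores: Let D ∈ {0,1}, W discrete, e(W) = P(D=1|W) ∈ (0,1), π = P(D=1) > 0, and let m₁(W), m₀(W) be arbitrary bounded functions of W. Then E[ (D/π)(ΔY − m₁(W)) − ((1−D)e(W))/(π(1−e(W))) (ΔY − m₀(W)) + (e(W)/π)(m₁(W) − m₀(W)) ] = E[ ((D − e(W))/(π(1−e(W)))) ΔY ], for any bounded random variable ΔY. -/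
open Finset
open scoped Classical BigOperators

variable {Ω : Type*} [Fintype Ω] {𝕎 : Type*} [Fintype 𝕎] [DecidableEq 𝕎]

lemma key_sum {Ω : Type*} [Fintype Ω] {𝕎 : Type*} [Fintype 𝕎] [DecidableEq 𝕎]
    (p : Ω → ℝ) (hp : ∀ ω, 0 ≤ p ω)
    (D : Ω → ℝ) (hD : ∀ ω, D ω = 0 ∨ D ω = 1)
    (W : Ω → 𝕎) (e : 𝕎 → ℝ)
    (he : ∀ w, e w = Pr p (fun ω => D ω = 1 ∧ W ω = w) / Pr p (fun ω => W ω = w))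
    (g : 𝕎 → ℝ) :
    ∑ ω, p ω * ((e (W ω) - D ω) * g (W ω)) = 0 := by
  classical
  rw [← Finset.sum_fiberwise Finset.univ W (fun ω => p ω * ((e (W ω) - D ω) * g (W ω)))]
  apply Finset.sum_eq_zero
  intro w _
  have hfib : ∀ ω ∈ Finset.univ.filter (fun ω => W ω = w),
      p ω * ((e (W ω) - D ω) * g (W ω)) = (p ω * e w - p ω * D ω) * g w := by
    intro ω hω
    simp only [Finset.mem_filter] at hω
    rw [hω.2]; ring
  rw [Finset.sum_congr rfl hfib, ← Finset.sum_mul, Finset.sum_sub_distrib]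
  have hDs : ∑ ω ∈ Finset.univ.filter (fun ω => W ω = w), p ω * D ω
      = Pr p (fun ω => D ω = 1 ∧ W ω = w) := by
    rw [Pr, Finset.sum_filter, Finset.sum_filter]
    refine Finset.sum_congr rfl fun ω _ => ?_
    rcases hD ω with h | h <;> split_ifs <;> simp_all
  rw [hDs, ← Finset.sum_mul]
  rcases eq_or_lt_of_le (Finset.sum_nonneg (fun ω _ => hp ω) :
      (0:ℝ) ≤ ∑ ω ∈ Finset.univ.filter (fun ω => W ω = w), p ω) with h0 | hpos
  · have hz : Pr p (fun ω => D ω = 1 ∧ W ω = w) = 0 := by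
      rw [← hDs]
      apply Finset.sum_eq_zero
      intro ω hω
      have : p ω = 0 := by
        by_contra hne
        have := (Finset.sum_eq_zero_iff_of_nonneg (fun ω _ => hp ω)).mp h0.symm ω hω
        exact hne this
      simp [this]
    rw [hz, ← h0]
    ring
  · have hPr : Pr p (fun ω => W ω = w) = ∑ ω ∈ Finset.univ.filter (fun ω => W ω = w), p ω := by
      rw [Pr, Finset.sum_filter, Finset.sum_filter]
      exact Finset.sum_congr rfl fun a _ => by split_ifs <;> rfl
    have hPS : e w * (∑ ω ∈ Finset.univ.filter (fun ω => W ω = w), p ω)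
        = Pr p (fun ω => D ω = 1 ∧ W ω = w) := by
      rw [he w, hPr, div_mul_cancel₀ _ (ne_of_gt hpos)]
    linear_combination g w * hPS

theorem dr_reduces_to_ipw_when_ps_correct
    (p : Ω → ℝ) (hp : ∀ ω, 0 ≤ p ω) (hp1 : ∑ ω, p ω = 1)
    (D : Ω → ℝ) (hD : ∀ ω, D ω = 0 ∨ D ω = 1)
    (W : Ω → 𝕎) (ΔY : Ω → ℝ)
    (e : 𝕎 → ℝ) (π : ℝ)
    (he : ∀ w, e w = Pr p (fun ω => D ω = 1 ∧ W ω = w) / Pr p (fun ω => W ω = w))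
    (hπ : π = Pr p (fun ω => D ω = 1))
    (hπpos : 0 < π)
    (hoverlap : ∀ w, 0 < Pr p (fun ω => W ω = w) → 0 < e w ∧ e w < 1)
    (m1 m0 : 𝕎 → ℝ) :
    Ex p (fun ω =>
        D ω / π * (ΔY ω - m1 (W ω))
          - (1 - D ω) * e (W ω) / (π * (1 - e (W ω))) * (ΔY ω - m0 (W ω))
          + e (W ω) / π * (m1 (W ω) - m0 (W ω)))
      = Ex p (fun ω => (D ω - e (W ω)) / (π * (1 - e (W ω))) * ΔY ω) := by

  classical
  set g : 𝕎 → ℝ := fun w => m1 w / π + e w * m0 w / ((1 - e w) * π) with hg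
  have key := key_sum p hp D hD W e he g
  rw [Ex, Ex, ← sub_eq_zero, ← Finset.sum_sub_distrib, ← key]
  apply Finset.sum_congr rfl
  intro ω _
  rcases eq_or_lt_of_le (hp ω) with h0 | hpos
  · rw [← h0]; ring
  · have hPrw : 0 < Pr p (fun x => W x = W ω) := by
      apply lt_of_lt_of_le hpos
      apply Finset.single_le_sum (fun x _ => hp x)
      simp
    have he1 : e (W ω) ≠ 1 := ne_of_lt (hoverlap _ hPrw).2
    have h1e : (1 : ℝ) - e (W ω) ≠ 0 := sub_ne_zero.mpr (Ne.symm he1)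
    have hπ0 : π ≠ 0 := ne_of_gt hπpos
    rw [← mul_sub, hg]
    congr 1
    rcases hD ω with hd | hd <;> rw [hd] <;> field_simp <;> ring
end

section
/- Double robustness under correct outcome regressions: Let D ∈ {0,1}, W discrete, with true propensity e(W) = P(D=1|W) ∈ (0,1), and suppose ê(W), π̂ are arbitrary functions with ê(W) ∈ (0,1) and π̂ > 0. Let ΔY be bounded and define μ₁(W) = E[ΔY | D=1, W], μ₀(W) = E[ΔY | D=0, W]. Then E[ (D/π̂)(ΔY − μ₁(W)) − ((1−D)ê(W))/(π̂(1−ê(W))) (ΔY − μ₀(W)) + (ê(W)/π̂)(μ₁(W) − μ₀(W)) ] = E[ (ê(W)/π̂)(μ₁(W) − μ₀(W)) ]. -/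
open Finset
open scoped Classical BigOperators

variable {Ω : Type*} [Fintype Ω] {𝕎 : Type*} [Fintype 𝕎] [DecidableEq 𝕎]

lemma key_residual_zero (p : Ω → ℝ) (hp : ∀ ω, 0 ≤ p ω)
    (A : Ω → Prop) (χ : Ω → ℝ) (hχ : ∀ ω, χ ω = if A ω then 1 else 0)
    (W : Ω → 𝕎) (ΔY : Ω → ℝ) (μ : 𝕎 → ℝ)
    (hμ : ∀ w, μ w = CE p ΔY (fun ω => A ω ∧ W ω = w)) (g : 𝕎 → ℝ) :
    ∑ ω, p ω * (χ ω * g (W ω) * (ΔY ω - μ (W ω))) = 0 := by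
  classical
  rw [← Finset.sum_fiberwise univ W
      (fun ω => p ω * (χ ω * g (W ω) * (ΔY ω - μ (W ω))))]
  apply Finset.sum_eq_zero
  intro w _
  have hsub : ∀ ω ∈ univ.filter (fun ω => W ω = w),
      p ω * (χ ω * g (W ω) * (ΔY ω - μ (W ω))) ≠ 0 → A ω := by
    intro ω _ hne
    by_contra hA
    simp [hχ ω, hA] at hne
  rw [← Finset.sum_filter_of_ne hsub, Finset.filter_filter]
  have hset : (univ.filter fun ω => W ω = w ∧ A ω)
      = univ.filter (fun ω => A ω ∧ W ω = w) := by
    apply Finset.filter_congr; intro ω _; simp [and_comm]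
  rw [hset]
  have hval : ∀ ω ∈ univ.filter (fun ω => A ω ∧ W ω = w),
      p ω * (χ ω * g (W ω) * (ΔY ω - μ (W ω)))
        = g w * (p ω * ΔY ω - p ω * μ w) := by
    intro ω hω
    simp only [Finset.mem_filter] at hω
    rw [hχ ω, if_pos hω.2.1, hω.2.2]; ring
  rw [Finset.sum_congr rfl hval, ← Finset.mul_sum, Finset.sum_sub_distrib,
    ← Finset.sum_mul]
  set S := ∑ ω ∈ univ.filter (fun ω => A ω ∧ W ω = w), p ω * ΔY ω with hS
  set P := ∑ ω ∈ univ.filter (fun ω => A ω ∧ W ω = w), p ω with hPdef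
  have hμw : μ w = S / P := by
    rw [hμ w]
    simp only [CE, Pr, hS, hPdef, Finset.filter_congr_decidable]
    congr 1 <;> exact Finset.sum_congr (by congr) (fun _ _ => rfl)
  rcases eq_or_lt_of_le (Finset.sum_nonneg (fun ω _ => hp ω) :
      (0:ℝ) ≤ ∑ ω ∈ univ.filter (fun ω => A ω ∧ W ω = w), p ω) with h0 | h0
  · -- P = 0, so all p vanish on the event
    have hzero : ∀ ω ∈ univ.filter (fun ω => A ω ∧ W ω = w), p ω = 0 :=
      (Finset.sum_eq_zero_iff_of_nonneg (fun ω _ => hp ω)).mp h0.symm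
    have hSz : S = 0 :=
      Finset.sum_eq_zero (fun ω hω => by rw [hzero ω hω, zero_mul])
    have hPz : P = 0 := h0.symm
    rw [hSz, hPz]; ring
  · have hPne : P ≠ 0 := ne_of_gt h0
    rw [hμw]
    field_simp
    ring

theorem dr_reduces_to_regression_when_or_correct
    (p : Ω → ℝ) (hp : ∀ ω, 0 ≤ p ω) (hp1 : ∑ ω, p ω = 1)
    (D : Ω → ℝ) (hD : ∀ ω, D ω = 0 ∨ D ω = 1)
    (W : Ω → 𝕎) (ΔY : Ω → ℝ)
    (e : 𝕎 → ℝ)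
    (he : ∀ w, e w = Pr p (fun ω => D ω = 1 ∧ W ω = w) / Pr p (fun ω => W ω = w))
    (hoverlap : ∀ w, 0 < Pr p (fun ω => W ω = w) → 0 < e w ∧ e w < 1)
    (ehat : 𝕎 → ℝ) (πhat : ℝ)
    (hehat : ∀ w, 0 < ehat w ∧ ehat w < 1)
    (hπhat : 0 < πhat)
    (μ1 μ0 : 𝕎 → ℝ)
    (hμ1 : ∀ w, μ1 w = CE p ΔY (fun ω => D ω = 1 ∧ W ω = w))
    (hμ0 : ∀ w, μ0 w = CE p ΔY (fun ω => D ω = 0 ∧ W ω = w)) :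
    Ex p (fun ω =>
        D ω / πhat * (ΔY ω - μ1 (W ω))
          - (1 - D ω) * ehat (W ω) / (πhat * (1 - ehat (W ω))) * (ΔY ω - μ0 (W ω))
          + ehat (W ω) / πhat * (μ1 (W ω) - μ0 (W ω)))
      = Ex p (fun ω => ehat (W ω) / πhat * (μ1 (W ω) - μ0 (W ω))) := by
  classical
  have h1 := key_residual_zero p hp (fun ω => D ω = 1) D
    (fun ω => by rcases hD ω with h | h <;> simp [h]) W ΔY μ1 hμ1
    (fun _ => 1 / πhat)
  have h0 := key_residual_zero p hp (fun ω => D ω = 0) (fun ω => 1 - D ω)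
    (fun ω => by rcases hD ω with h | h <;> simp [h]) W ΔY μ0 hμ0
    (fun w => ehat w / (πhat * (1 - ehat w)))
  rw [Ex, Ex, ← sub_eq_zero, ← Finset.sum_sub_distrib]
  calc ∑ ω, (p ω * (D ω / πhat * (ΔY ω - μ1 (W ω))
          - (1 - D ω) * ehat (W ω) / (πhat * (1 - ehat (W ω))) * (ΔY ω - μ0 (W ω))
          + ehat (W ω) / πhat * (μ1 (W ω) - μ0 (W ω)))
        - p ω * (ehat (W ω) / πhat * (μ1 (W ω) - μ0 (W ω))))
      = (∑ ω, p ω * (D ω * (1 / πhat) * (ΔY ω - μ1 (W ω))))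
        - ∑ ω, p ω * ((1 - D ω) * (ehat (W ω) / (πhat * (1 - ehat (W ω))))
            * (ΔY ω - μ0 (W ω))) := by
        rw [← Finset.sum_sub_distrib]
        exact Finset.sum_congr rfl (fun ω _ => by ring)
    _ = 0 := by rw [h1, h0]; ring
end

section
/- IPW form of conditional contrast with marginalization: Let D ∈ {0,1}, W discrete with e(W) = P(D=1|W) ∈ (0,1) and π = P(D=1) > 0, and let ΔY be bounded. Then E[ ((D − e(W))/(π(1 − e(W)))) ΔY ] = Σ_w P(W=w | D=1) · ( E[ΔY | D=1, W=w] − E[ΔY | D=0, W=w] ), i.e., the IPW functional equals the average conditional contrast weighted by the conditional distribution of W given D=1. -/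
open Finset
open scoped Classical BigOperators

variable {Ω : Type*} [Fintype Ω] {𝕎 : Type*} [Fintype 𝕎] [DecidableEq 𝕎]

theorem ipw_equals_weighted_conditional_contrast
    (p : Ω → ℝ) (hp : ∀ ω, 0 ≤ p ω) (hp1 : ∑ ω, p ω = 1)
    (D : Ω → ℝ) (hD : ∀ ω, D ω = 0 ∨ D ω = 1)
    (W : Ω → 𝕎) (ΔY : Ω → ℝ)
    (e : 𝕎 → ℝ) (π : ℝ)
    (he : ∀ w, e w = Pr p (fun ω => D ω = 1 ∧ W ω = w) / Pr p (fun ω => W ω = w))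
    (hπ : π = Pr p (fun ω => D ω = 1))
    (hπpos : 0 < π)
    (hpos : ∀ w, 0 < Pr p (fun ω => W ω = w) →
      0 < Pr p (fun ω => D ω = 1 ∧ W ω = w) ∧ 0 < Pr p (fun ω => D ω = 0 ∧ W ω = w)) :
    Ex p (fun ω => (D ω - e (W ω)) / (π * (1 - e (W ω))) * ΔY ω)
      = ∑ w, (Pr p (fun ω => W ω = w ∧ D ω = 1) / π) *
          (CE p ΔY (fun ω => D ω = 1 ∧ W ω = w)
            - CE p ΔY (fun ω => D ω = 0 ∧ W ω = w)) := by
  classical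
  have hmain : ∀ w : 𝕎,
      (∑ ω ∈ univ.filter (fun ω => W ω = w),
        p ω * ((D ω - e (W ω)) / (π * (1 - e (W ω))) * ΔY ω))
      = (Pr p (fun ω => W ω = w ∧ D ω = 1) / π) *
          (CE p ΔY (fun ω => D ω = 1 ∧ W ω = w)
            - CE p ΔY (fun ω => D ω = 0 ∧ W ω = w)) := by
    intro w
    have hfilt : ∀ (A : Ω → Prop) (i1 i2 : DecidablePred A),
        @Finset.filter Ω A i1 univ = @Finset.filter Ω A i2 univ := fun A i1 i2 => by
      ext ω; simp only [Finset.mem_filter]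
    have hPrsum : ∀ (A : Ω → Prop) (i1 i2 : DecidablePred A) (g : Ω → ℝ),
        (∑ ω ∈ @Finset.filter Ω A i1 univ, g ω)
          = ∑ ω ∈ @Finset.filter Ω A i2 univ, g ω :=
      fun A i1 i2 g => Finset.sum_congr (hfilt A i1 i2) fun _ _ => rfl
    -- bridges from Pr/CE (Classical instances) to local sums
    have hbw : Pr p (fun ω => W ω = w)
        = ∑ ω ∈ univ.filter (fun ω => W ω = w), p ω := by
      unfold Pr; exact hPrsum _ _ _ _
    have hb1 : Pr p (fun ω => D ω = 1 ∧ W ω = w)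
        = ∑ ω ∈ univ.filter (fun ω => D ω = 1 ∧ W ω = w), p ω := by
      unfold Pr; exact hPrsum _ _ _ _
    have hb0 : Pr p (fun ω => D ω = 0 ∧ W ω = w)
        = ∑ ω ∈ univ.filter (fun ω => D ω = 0 ∧ W ω = w), p ω := by
      unfold Pr; exact hPrsum _ _ _ _
    have hbR : Pr p (fun ω => W ω = w ∧ D ω = 1)
        = ∑ ω ∈ univ.filter (fun ω => D ω = 1 ∧ W ω = w), p ω := by
      unfold Pr
      apply Finset.sum_congr _ (fun _ _ => rfl)
      ext ω; simp only [Finset.mem_filter]; tauto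
    have hCE1 : CE p ΔY (fun ω => D ω = 1 ∧ W ω = w)
        = (∑ ω ∈ univ.filter (fun ω => D ω = 1 ∧ W ω = w), p ω * ΔY ω)
          / Pr p (fun ω => D ω = 1 ∧ W ω = w) := by
      unfold CE; congr 1; exact hPrsum _ _ _ _
    have hCE0 : CE p ΔY (fun ω => D ω = 0 ∧ W ω = w)
        = (∑ ω ∈ univ.filter (fun ω => D ω = 0 ∧ W ω = w), p ω * ΔY ω)
          / Pr p (fun ω => D ω = 0 ∧ W ω = w) := by
      unfold CE; congr 1; exact hPrsum _ _ _ _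
    -- splitting any sum over the W-cell into D=1 and D=0 parts
    have hsplitgen : ∀ g : Ω → ℝ,
        (∑ ω ∈ univ.filter (fun ω => W ω = w), g ω)
        = (∑ ω ∈ univ.filter (fun ω => D ω = 1 ∧ W ω = w), g ω)
          + (∑ ω ∈ univ.filter (fun ω => D ω = 0 ∧ W ω = w), g ω) := by
      intro g
      rw [← Finset.sum_filter_add_sum_filter_not (univ.filter fun ω => W ω = w)
        (fun ω => D ω = 1)]
      congr 1
      · congr 1; ext ω; simp only [mem_filter, mem_univ, true_and]; tauto
      · congr 1; ext ω; simp only [mem_filter, mem_univ, true_and]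
        constructor
        · rintro ⟨hw, hd⟩; exact ⟨(hD ω).resolve_right hd, hw⟩
        · rintro ⟨hd0, hw⟩; refine ⟨hw, ?_⟩; rw [hd0]; norm_num
    by_cases hPw : 0 < Pr p (fun ω => W ω = w)
    · obtain ⟨hP1, hP0⟩ := hpos w hPw
      set P1 := Pr p (fun ω => D ω = 1 ∧ W ω = w) with hP1def
      set P0 := Pr p (fun ω => D ω = 0 ∧ W ω = w) with hP0def
      set Pw := Pr p (fun ω => W ω = w) with hPwdef
      have hsplit : Pw = P1 + P0 := by
        rw [hbw, hb1, hb0]; exact hsplitgen p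
      have hew : e w = P1 / Pw := he w
      have hew1 : 1 - e w = P0 / Pw := by
        rw [hew, hsplit]; field_simp; ring
      set S1 := ∑ ω ∈ univ.filter (fun ω => D ω = 1 ∧ W ω = w), p ω * ΔY ω with hS1
      set S0 := ∑ ω ∈ univ.filter (fun ω => D ω = 0 ∧ W ω = w), p ω * ΔY ω with hS0
      have hsum1 : (∑ ω ∈ univ.filter (fun ω => D ω = 1 ∧ W ω = w),
          p ω * ((D ω - e (W ω)) / (π * (1 - e (W ω))) * ΔY ω))
          = ((1 - e w) / (π * (1 - e w))) * S1 := by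
        rw [hS1, Finset.mul_sum]
        apply Finset.sum_congr rfl
        intro ω hω
        simp only [mem_filter, mem_univ, true_and] at hω
        rw [hω.1, hω.2]; ring
      have hsum0 : (∑ ω ∈ univ.filter (fun ω => D ω = 0 ∧ W ω = w),
          p ω * ((D ω - e (W ω)) / (π * (1 - e (W ω))) * ΔY ω))
          = ((0 - e w) / (π * (1 - e w))) * S0 := by
        rw [hS0, Finset.mul_sum]
        apply Finset.sum_congr rfl
        intro ω hω
        simp only [mem_filter, mem_univ, true_and] at hω
        rw [hω.1, hω.2]; ring
      rw [hsplitgen, hsum1, hsum0, hCE1, hCE0, hbR, ← hb1, hew1, hew, hsplit]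
      have h1 : P1 ≠ 0 := ne_of_gt hP1
      have h0 : P0 ≠ 0 := ne_of_gt hP0
      have hπ0 : π ≠ 0 := ne_of_gt hπpos
      have hPwne : P1 + P0 ≠ 0 := by positivity
      field_simp
      ring
    · -- degenerate cell: all masses vanish
      have hPrnn : 0 ≤ Pr p (fun ω => W ω = w) := by
        rw [hbw]; exact Finset.sum_nonneg fun ω _ => hp ω
      have hPw0 : (∑ ω ∈ univ.filter (fun ω => W ω = w), p ω) = 0 := by
        rw [← hbw]; exact le_antisymm (not_lt.mp hPw) hPrnn
      have hzero : ∀ ω ∈ univ.filter (fun ω => W ω = w), p ω = 0 :=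
        (Finset.sum_eq_zero_iff_of_nonneg (fun ω _ => hp ω)).mp hPw0
      have hL : (∑ ω ∈ univ.filter (fun ω => W ω = w),
          p ω * ((D ω - e (W ω)) / (π * (1 - e (W ω))) * ΔY ω)) = 0 := by
        apply Finset.sum_eq_zero
        intro ω hω; rw [hzero ω hω]; ring
      have hR : Pr p (fun ω => W ω = w ∧ D ω = 1) = 0 := by
        rw [hbR]
        apply Finset.sum_eq_zero
        intro ω hω
        simp only [mem_filter, mem_univ, true_and] at hω
        exact hzero ω (by simp [hω.2])
      rw [hL, hR]
      simp
  calc Ex p (fun ω => (D ω - e (W ω)) / (π * (1 - e (W ω))) * ΔY ω)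
      = ∑ w, ∑ ω ∈ univ.filter (fun ω => W ω = w),
          p ω * ((D ω - e (W ω)) / (π * (1 - e (W ω))) * ΔY ω) := by
        rw [Ex]
        exact (Finset.sum_fiberwise univ W _).symm
    _ = _ := Finset.sum_congr rfl fun w _ => hmain w
end
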